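/- Let A be an Artin algebra, M a Gorenstein projective A-module, and suppose M is a generator (i.e., A lies in add M). If M is injective, then M is projective. Consequently, if every Gorenstein projective A-module is injective, then A is CM-free (every Gorenstein projective module is projective). -/

import Mathlib

/-! A Gorenstein projective module embeds into a projective module (the kernel of `d 0` sits
inside `P 0`). If the module is injective, this embedding splits, so the module is a retract
of a projective module and hence projective. -/

open CategoryTheory CategoryTheory.Limits Opposite

noncomputable section

/-- The `i`-th Ext group between two `A`-modules. -/
def extGroup (A : Type) [Ring A] (M N : ModuleCat A) (i : ℕ) : Type :=
  ((Ext ℤ (ModuleCat A) i).obj (op M)).obj N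

/-- Vanishing of the `i`-th Ext group. -/
def extVanish (A : Type) [Ring A] (M N : ModuleCat A) (i : ℕ) : Prop :=
  Subsingleton (extGroup A M N i)

/-- `X` belongs to `add M`: `X` is a direct summand of a finite direct sum of copies of `M`. -/
def memAdd (A : Type) [Ring A] (M X : ModuleCat A) : Prop :=
  ∃ (k : ℕ) (s : X ⟶ ModuleCat.of A (Fin k → M)) (r : ModuleCat.of A (Fin k → M) ⟶ X),
    s ≫ r = 𝟙 X

/-- `M` is Gorenstein projective: a syzygy of a totally acyclic complex of projectives. -/
def IsGorensteinProjective (A : Type) [Ring A] (M : ModuleCat A) : Prop :=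
  ∃ (P : ℤ → ModuleCat A) (d : ∀ n : ℤ, P n ⟶ P (n + 1)),
    (∀ n, Projective (P n)) ∧
    (∀ n, Function.Exact (d n) (d (n + 1))) ∧
    (∀ (Q : ModuleCat A), Projective Q → ∀ n : ℤ,
      Function.Exact (fun g : P (n + 1 + 1) ⟶ Q => d (n + 1) ≫ g)
        (fun g : P (n + 1) ⟶ Q => d n ≫ g)) ∧
    Nonempty (M ≅ kernel (d 0))

/-- A Gorenstein projective generator: a finitely generated Gorenstein projective module
`M` with `A ∈ add M`. -/
def IsGPGenerator (A : Type) [Ring A] (M : ModuleCat A) : Prop :=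
  Module.Finite A M ∧ IsGorensteinProjective A M ∧ memAdd A M (ModuleCat.of A A)

/-- The rigidity degree of `M`: `sup { n | Ext^i(M,M) = 0 for all 1 ≤ i ≤ n }`. -/
def rigidityDegree (A : Type) [Ring A] (M : ModuleCat A) : ℕ∞ :=
  sSup {n : ℕ∞ | ∃ m : ℕ, n = m ∧ ∀ i : ℕ, 1 ≤ i → i ≤ m → extVanish A M M i}

/-- The Gorenstein rigidity dimension of `A`. -/
def Grigdim (A : Type) [Ring A] : ℕ∞ :=
  sSup {n : ℕ∞ | ∃ M : ModuleCat A, IsGPGenerator A M ∧ n = rigidityDegree A M} + 2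

def CategoryTheory.Retract.ofMonoOfInjective {C : Type*} [Category C] {X Y : C} [Injective X]
    (i : X ⟶ Y) [Mono i] : Retract X Y where
  i := i
  r := Injective.factorThru (𝟙 X) i
  retract := Injective.comp_factorThru _ _

theorem IsGorensteinProjective.exists_mono_projective {A : Type} [Ring A] {M : ModuleCat A}
    (hM : IsGorensteinProjective A M) :
    ∃ (P : ModuleCat A) (_ : Projective P) (i : M ⟶ P), Mono i := by
  obtain ⟨P, d, hproj, -, -, ⟨e⟩⟩ := hM
  exact ⟨P 0, hproj 0, e.hom ≫ kernel.ι (d 0), mono_comp _ _⟩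

theorem IsGorensteinProjective.projective_of_injective {A : Type} [Ring A] {M : ModuleCat A}
    (hM : IsGorensteinProjective A M) [Injective M] : Projective M := by
  obtain ⟨P, _, i, _⟩ := hM.exists_mono_projective
  exact (Retract.ofMonoOfInjective i).projective

theorem gp_generator_injective_implies_projective_general
    (A : Type) [Ring A]
    (M : ModuleCat A)
    (hGP : IsGorensteinProjective A M) :
    (Injective M → Projective M) ∧
    ((∀ G : ModuleCat A, Module.Finite A G → IsGorensteinProjective A G → Injective G) →
      ∀ G : ModuleCat A, Module.Finite A G → IsGorensteinProjective A G → Projective G) :=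
  ⟨fun _ => hGP.projective_of_injective,
    fun hinj G hfin hG => have := hinj G hfin hG; hG.projective_of_injective⟩

/-- If a Gorenstein projective generator is injective then it is projective; consequently,
if every (f.g.) Gorenstein projective module is injective, then the algebra is CM-free. -/
theorem gp_generator_injective_implies_projective
    (A : Type) [Ring A] [IsArtinianRing A]
    (M : ModuleCat A) (hfin : Module.Finite A M)
    (hGP : IsGorensteinProjective A M)
    (hgen : memAdd A M (ModuleCat.of A A)) :
    (Injective M → Projective M) ∧
    ((∀ G : ModuleCat A, Module.Finite A G → IsGorensteinProjective A G → Injective G) →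
      ∀ G : ModuleCat A, Module.Finite A G → IsGorensteinProjective A G → Projective G) :=
  gp_generator_injective_implies_projective_general A M hGP
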